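/- Let g, h ∈ GL(d,ℝ) and p ∈ {1,…,d−1}. Suppose g and h each have a gap of index p, and let α := ∠(U_p(h), U_{d−p}(g⁻¹)) with α > 0. Then σ_p(gh) ≥ sin(α)·σ_p(g)·σ_p(h) and σ_{p+1}(gh) ≤ (sin α)⁻¹·σ_{p+1}(g)·σ_{p+1}(h). -/

import Mathlib

noncomputable section

open scoped Matrix RealInnerProductSpace
open Filter Topology

namespace Paper

abbrev Euc (d : ℕ) : Type := EuclideanSpace ℝ (Fin d)

/-- The action of a `d × d` real matrix on Euclidean space. -/
def act {d : ℕ} (g : Matrix (Fin d) (Fin d) ℝ) (v : Euc d) : Euc d :=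
  Matrix.toEuclideanCLM (𝕜 := ℝ) g v

/-- The operator norm of a matrix acting on Euclidean space. -/
def opNorm {d : ℕ} (g : Matrix (Fin d) (Fin d) ℝ) : ℝ :=
  ‖(Matrix.toEuclideanCLM (𝕜 := ℝ) g : Euc d →L[ℝ] Euc d)‖

/-- The underlying matrix of an element of `GL (Fin d) ℝ`. -/
def mat {d : ℕ} (g : GL (Fin d) ℝ) : Matrix (Fin d) (Fin d) ℝ := ↑g

/-- The `p`-th singular value (`1`-indexed), via the min-max characterization:
`σ_p(g)` is the largest, over `p`-dimensional subspaces `P`, of the minimal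
stretch of unit vectors of `P`. -/
def sv {d : ℕ} (g : Matrix (Fin d) (Fin d) ℝ) (p : ℕ) : ℝ :=
  sSup { r | ∃ P : Submodule ℝ (Euc d), Module.finrank ℝ P = p ∧
      r = sInf { t | ∃ v ∈ P, ‖v‖ = 1 ∧ t = ‖act g v‖ } }

/-- `g` has a gap of index `p` if `σ_p(g) > σ_{p+1}(g)`. -/
def HasGap {d : ℕ} (g : Matrix (Fin d) (Fin d) ℝ) (p : ℕ) : Prop :=
  sv g (p + 1) < sv g p

/-- `U` is a Cartan attractor of index `p` for `g`: for some singular value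
decomposition `g = k·a·l` (`k`, `l` orthogonal, `a` diagonal with decreasing
nonnegative entries), `U` is the span of the first `p` columns of `k`. -/
def IsCartanAttractor {d : ℕ} (g : Matrix (Fin d) (Fin d) ℝ) (p : ℕ)
    (U : Submodule ℝ (Euc d)) : Prop :=
  ∃ k l : Matrix (Fin d) (Fin d) ℝ, ∃ σ : Fin d → ℝ,
    k ∈ Matrix.unitaryGroup (Fin d) ℝ ∧ l ∈ Matrix.unitaryGroup (Fin d) ℝ ∧
    (∀ i j : Fin d, i ≤ j → σ j ≤ σ i) ∧ (∀ i, 0 ≤ σ i) ∧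
    g = k * Matrix.diagonal σ * l ∧
    U = Submodule.span ℝ { x : Euc d | ∃ i : Fin d, (i : ℕ) < p ∧
          x = (EuclideanSpace.equiv (Fin d) ℝ).symm (fun j => k j i) }

/-- The Cartan attractor `U_p(g)`; when `g` has a gap of index `p` it is the
unique subspace satisfying `IsCartanAttractor g p`. -/
def cartanAttractor {d : ℕ} (g : Matrix (Fin d) (Fin d) ℝ) (p : ℕ) :
    Submodule ℝ (Euc d) :=
  letI := Classical.propDecidable (∃ U, IsCartanAttractor g p U)
  if h : ∃ U, IsCartanAttractor g p U then h.choose else ⊥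

/-- The angle `∠(P,Q)` between two subspaces: the infimum of angles between
nonzero vectors of `P` and `Q`. -/
def subAngle {d : ℕ} (P Q : Submodule ℝ (Euc d)) : ℝ :=
  sInf { θ | ∃ v ∈ P, v ≠ 0 ∧ ∃ w ∈ Q, w ≠ 0 ∧ θ = InnerProductGeometry.angle v w }

/-- `sin ∠(v,w)`. -/
def sinAngle {d : ℕ} (v w : Euc d) : ℝ := Real.sin (InnerProductGeometry.angle v w)

/-- The distance `d(P,Q) = max_{v ∈ P∖{0}} min_{w ∈ Q∖{0}} sin ∠(v,w)`. -/
def grassDist {d : ℕ} (P Q : Submodule ℝ (Euc d)) : ℝ :=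
  sSup { r | ∃ v ∈ P, v ≠ 0 ∧
      r = sInf { s | ∃ w ∈ Q, w ≠ 0 ∧ s = sinAngle v w } }

/-- The image `g·P` of a subspace under a matrix. -/
def mapMat {d : ℕ} (g : Matrix (Fin d) (Fin d) ℝ) (P : Submodule ℝ (Euc d)) :
    Submodule ℝ (Euc d) :=
  P.map ((Matrix.toEuclideanCLM (𝕜 := ℝ) g : Euc d →L[ℝ] Euc d) : Euc d →ₗ[ℝ] Euc d)

/-- `m(g|_W)`, the minimal stretch of unit vectors of `W` under `g`. -/
def minRestrict {d : ℕ} (g : Matrix (Fin d) (Fin d) ℝ) (W : Submodule ℝ (Euc d)) : ℝ :=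
  sInf { t | ∃ v ∈ W, ‖v‖ = 1 ∧ t = ‖act g v‖ }

/-- `‖g|_W‖`, the maximal stretch of unit vectors of `W` under `g`. -/
def normRestrict {d : ℕ} (g : Matrix (Fin d) (Fin d) ℝ) (W : Submodule ℝ (Euc d)) : ℝ :=
  sSup { t | ∃ v ∈ W, ‖v‖ = 1 ∧ t = ‖act g v‖ }


-- ===== auxiliary lemmas =====
section Aux
variable {d : ℕ}

lemma act_apply (g : Matrix (Fin d) (Fin d) ℝ) (v : Euc d) (i : Fin d) :
    act g v i = ∑ j, g i j * v j := rfl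

lemma act_mul (A B : Matrix (Fin d) (Fin d) ℝ) (v : Euc d) :
    act (A * B) v = act A (act B v) := by simp [act, map_mul]

lemma act_smul (A : Matrix (Fin d) (Fin d) ℝ) (c : ℝ) (v : Euc d) :
    act A (c • v) = c • act A v := by simp [act]

lemma norm_act_smul (A : Matrix (Fin d) (Fin d) ℝ) (c : ℝ) (hc : 0 ≤ c) (v : Euc d) :
    ‖act A (c • v)‖ = c * ‖act A v‖ := by
  rw [act_smul, norm_smul, Real.norm_eq_abs, abs_of_nonneg hc]

lemma inner_euc (x y : Euc d) : ⟪x, y⟫ = ∑ i, x i * y i := by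
  simp [PiLp.inner_apply, mul_comm]

lemma norm_sq_euc (x : Euc d) : ‖x‖ ^ 2 = ∑ i, (x i) ^ 2 := by
  rw [← real_inner_self_eq_norm_sq, inner_euc]
  exact Finset.sum_congr rfl fun i _ => (sq (x i)).symm

lemma inner_act_act {k : Matrix (Fin d) (Fin d) ℝ} (hk : k ∈ Matrix.unitaryGroup (Fin d) ℝ)
    (x y : Euc d) : ⟪act k x, act k y⟫ = ⟪x, y⟫ := by
  have h1 : star k * k = 1 := hk.1
  have hadj : (Matrix.toEuclideanCLM (𝕜 := ℝ) k).adjoint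
      = Matrix.toEuclideanCLM (𝕜 := ℝ) (star k) := by
    rw [map_star]; rfl
  calc ⟪act k x, act k y⟫ = ⟪x, (Matrix.toEuclideanCLM (𝕜 := ℝ) k).adjoint (act k y)⟫ :=
        (ContinuousLinearMap.adjoint_inner_right _ _ _).symm
    _ = ⟪x, y⟫ := by
        rw [hadj]
        show ⟪x, act (star k) (act k y)⟫ = _
        rw [show act (star k) (act k y) = act (star k * k) y by rw [act_mul], h1]
        simp [act, map_one]

lemma norm_act_unitary {k : Matrix (Fin d) (Fin d) ℝ} (hk : k ∈ Matrix.unitaryGroup (Fin d) ℝ)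
    (x : Euc d) : ‖act k x‖ = ‖x‖ := by
  have := inner_act_act hk x x
  rw [real_inner_self_eq_norm_sq, real_inner_self_eq_norm_sq] at this
  nlinarith [norm_nonneg (act k x), norm_nonneg x]

lemma act_star_act {k : Matrix (Fin d) (Fin d) ℝ} (hk : k ∈ Matrix.unitaryGroup (Fin d) ℝ)
    (x : Euc d) : act k (act (star k) x) = x := by
  rw [← act_mul, hk.2]; simp [act, map_one]

lemma act_star_act' {k : Matrix (Fin d) (Fin d) ℝ} (hk : k ∈ Matrix.unitaryGroup (Fin d) ℝ)
    (x : Euc d) : act (star k) (act k x) = x := by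
  rw [← act_mul, hk.1]; simp [act, map_one]

/-- linear equivalence given by a unitary matrix -/
def uEquiv {k : Matrix (Fin d) (Fin d) ℝ} (hk : k ∈ Matrix.unitaryGroup (Fin d) ℝ) :
    Euc d ≃ₗ[ℝ] Euc d where
  toFun := act k
  invFun := act (star k)
  map_add' a b := by simp [act]
  map_smul' c a := by simp [act]
  left_inv x := act_star_act' hk x
  right_inv x := act_star_act hk x

@[simp] lemma uEquiv_apply {k : Matrix (Fin d) (Fin d) ℝ} (hk : k ∈ Matrix.unitaryGroup (Fin d) ℝ)
    (x : Euc d) : uEquiv hk x = act k x := rfl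

def coordSub (s : Finset (Fin d)) : Submodule ℝ (Euc d) where
  carrier := {x | ∀ i ∉ s, x i = 0}
  add_mem' := by intro a b ha hb i hi; simp [PiLp.add_apply, ha i hi, hb i hi]
  zero_mem' := by intro i hi; rfl
  smul_mem' := by intro c a ha i hi; simp [PiLp.smul_apply, ha i hi]

def coordEquiv (s : Finset (Fin d)) : coordSub s ≃ₗ[ℝ] (s → ℝ) where
  toFun x := fun i => x.1 i
  invFun y := ⟨WithLp.toLp 2 (fun i => if h : i ∈ s then y ⟨i, h⟩ else 0 : Fin d → ℝ), by
    intro i hi; simp [hi]⟩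
  map_add' a b := rfl
  map_smul' c a := rfl
  left_inv := by
    rintro ⟨x, hx⟩; ext i; by_cases h : i ∈ s <;> simp [h]
    exact (hx i h).symm
  right_inv := by intro y; ext i; simp

lemma finrank_coordSub (s : Finset (Fin d)) :
    Module.finrank ℝ (coordSub s) = s.card := by
  rw [(coordEquiv s).finrank_eq]
  simp [Module.finrank_pi]

lemma mem_coordSub (s : Finset (Fin d)) (x : Euc d) :
    x ∈ coordSub s ↔ ∀ i ∉ s, x i = 0 := Iff.rfl

/-- the finset of indices with value < q -/
def loIdx (d q : ℕ) : Finset (Fin d) := Finset.univ.filter (fun i => (i : ℕ) < q)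

lemma mem_loIdx {q : ℕ} {i : Fin d} : i ∈ loIdx d q ↔ (i : ℕ) < q := by
  simp [loIdx]

lemma card_loIdx {q : ℕ} (hq : q ≤ d) : (loIdx d q).card = q := by
  classical
  have : loIdx d q = Finset.image (Fin.castLE hq) Finset.univ := by
    ext i
    simp only [mem_loIdx, Finset.mem_image, Finset.mem_univ, true_and]
    constructor
    · intro hi; exact ⟨⟨(i : ℕ), hi⟩, by ext; simp⟩
    · rintro ⟨j, rfl⟩; exact j.2
  rw [this, Finset.card_image_of_injective _ (Fin.castLE_injective hq), Finset.card_univ,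
    Fintype.card_fin]

lemma card_compl_loIdx {q : ℕ} (hq : q ≤ d) : ((loIdx d q)ᶜ).card = d - q := by
  rw [Finset.card_compl, card_loIdx hq, Fintype.card_fin]

end Aux
section Aux2
variable {d : ℕ}

lemma exists_unit_of_finrank_pos {P : Submodule ℝ (Euc d)} (h : 0 < Module.finrank ℝ P) :
    ∃ v ∈ P, ‖v‖ = 1 := by
  have hbot : P ≠ ⊥ := by
    intro hb
    rw [hb, finrank_bot] at h
    exact lt_irrefl _ h
  obtain ⟨v, hvP, hv0⟩ := Submodule.exists_mem_ne_zero_of_ne_bot hbot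
  refine ⟨‖v‖⁻¹ • v, P.smul_mem _ hvP, ?_⟩
  rw [norm_smul, Real.norm_eq_abs, abs_inv, abs_norm, inv_mul_cancel₀ (norm_ne_zero_iff.2 hv0)]

lemma stretch_bddBelow (g : Matrix (Fin d) (Fin d) ℝ) (P : Submodule ℝ (Euc d)) :
    BddBelow { t | ∃ v ∈ P, ‖v‖ = 1 ∧ t = ‖act g v‖ } := by
  refine ⟨0, ?_⟩; rintro t ⟨v, -, -, rfl⟩; exact norm_nonneg _

lemma minRestrict_le {g : Matrix (Fin d) (Fin d) ℝ} {P : Submodule ℝ (Euc d)}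
    {v : Euc d} (hv : v ∈ P) (h1 : ‖v‖ = 1) : minRestrict g P ≤ ‖act g v‖ :=
  csInf_le (stretch_bddBelow g P) ⟨v, hv, h1, rfl⟩

lemma le_minRestrict {g : Matrix (Fin d) (Fin d) ℝ} {P : Submodule ℝ (Euc d)} {c : ℝ}
    (hne : ∃ v ∈ P, ‖v‖ = 1) (h : ∀ v ∈ P, ‖v‖ = 1 → c ≤ ‖act g v‖) :
    c ≤ minRestrict g P := by
  apply le_csInf
  · obtain ⟨v, hv, h1⟩ := hne; exact ⟨‖act g v‖, v, hv, h1, rfl⟩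
  · rintro t ⟨v, hv, h1, rfl⟩; exact h v hv h1

lemma norm_act_le (g : Matrix (Fin d) (Fin d) ℝ) {v : Euc d} (h1 : ‖v‖ = 1) :
    ‖act g v‖ ≤ opNorm g := by
  have := (Matrix.toEuclideanCLM (𝕜 := ℝ) g).le_opNorm v
  rw [h1, mul_one] at this; exact this

lemma sv_bddAbove (g : Matrix (Fin d) (Fin d) ℝ) (p : ℕ) :
    BddAbove { r | ∃ P : Submodule ℝ (Euc d), Module.finrank ℝ P = p ∧
      r = sInf { t | ∃ v ∈ P, ‖v‖ = 1 ∧ t = ‖act g v‖ } } := by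
  refine ⟨opNorm g, ?_⟩
  rintro r ⟨P, hP, rfl⟩
  rcases Nat.eq_zero_or_pos p with hp | hp
  · subst hp
    have : (0 : Euc d) ∈ P := P.zero_mem
    -- sInf of the (possibly empty) stretch set: if the set is empty sInf = 0 ≤ opNorm
    by_cases hne : ∃ v ∈ P, ‖v‖ = 1
    · obtain ⟨v, hv, h1⟩ := hne
      exact le_trans (minRestrict_le hv h1) (norm_act_le g h1)
    · have : { t | ∃ v ∈ P, ‖v‖ = 1 ∧ t = ‖act g v‖ } = ∅ := by
        ext t; simp only [Set.mem_setOf_eq, Set.mem_empty_iff_false, iff_false]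
        rintro ⟨v, hv, h1, rfl⟩; exact hne ⟨v, hv, h1⟩
      rw [this, Real.sInf_empty]
      exact (ContinuousLinearMap.opNorm_nonneg _)
  · obtain ⟨v, hv, h1⟩ := exists_unit_of_finrank_pos (hP ▸ hp)
    exact le_trans (minRestrict_le hv h1) (norm_act_le g h1)

lemma minRestrict_le_sv {g : Matrix (Fin d) (Fin d) ℝ} {P : Submodule ℝ (Euc d)} {p : ℕ}
    (hP : Module.finrank ℝ P = p) : minRestrict g P ≤ sv g p :=
  le_csSup (sv_bddAbove g p) ⟨P, hP, rfl⟩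

lemma sv_le {g : Matrix (Fin d) (Fin d) ℝ} {p : ℕ} {c : ℝ} (hpd : p ≤ d)
    (h : ∀ P : Submodule ℝ (Euc d), Module.finrank ℝ P = p → minRestrict g P ≤ c) :
    sv g p ≤ c := by
  apply csSup_le
  · refine ⟨minRestrict g (coordSub (loIdx d p)), coordSub (loIdx d p), ?_, rfl⟩
    rw [finrank_coordSub, card_loIdx hpd]
  · rintro r ⟨P, hP, rfl⟩; exact h P hP

lemma act_diagonal (σ : Fin d → ℝ) (v : Euc d) (i : Fin d) :
    act (Matrix.diagonal σ) v i = σ i * v i := by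
  rw [act_apply]
  simp [Matrix.diagonal_apply, Finset.sum_ite_eq, mul_comm]

lemma norm_sq_act_diagonal (σ : Fin d → ℝ) (v : Euc d) :
    ‖act (Matrix.diagonal σ) v‖ ^ 2 = ∑ i, (σ i) ^ 2 * (v i) ^ 2 := by
  rw [norm_sq_euc]
  refine Finset.sum_congr rfl fun i _ => ?_
  rw [act_diagonal]; ring

end Aux2
section Aux3
variable {d : ℕ}

lemma act_one (v : Euc d) : act (1 : Matrix (Fin d) (Fin d) ℝ) v = v := by
  simp [act, map_one]

lemma le_of_sq_le_sq {a b : ℝ} (ha : 0 ≤ a) (hb : 0 ≤ b) (h : a ^ 2 ≤ b ^ 2) : a ≤ b := by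
  nlinarith

lemma euc_sum_apply {ι : Type*} (s : Finset ι) (f : ι → Euc d) (j : Fin d) :
    (∑ i ∈ s, f i) j = ∑ i ∈ s, f i j := by
  classical
  induction s using Finset.induction_on with
  | empty => rfl
  | insert _ _ hnot ih => rw [Finset.sum_insert hnot, Finset.sum_insert hnot, PiLp.add_apply, ih]

lemma coordSub_eq_span (s : Finset (Fin d)) :
    coordSub s = Submodule.span ℝ ((fun i => EuclideanSpace.single i (1 : ℝ)) '' s) := by
  apply le_antisymm
  · intro x hx
    have hrep : x = ∑ i ∈ s, x i • EuclideanSpace.single i (1 : ℝ) := by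
      ext j
      rw [euc_sum_apply]
      simp only [PiLp.smul_apply, smul_eq_mul]
      by_cases hj : j ∈ s
      · rw [Finset.sum_eq_single j]
        · simp [EuclideanSpace.single_apply]
        · intro i _ hij
          simp [EuclideanSpace.single_apply, Ne.symm hij]
        · intro h; exact absurd hj h
      · rw [(mem_coordSub s x).1 hx j hj, Finset.sum_eq_zero]
        intro i hi
        have : j ≠ i := fun h => hj (h ▸ hi)
        rw [EuclideanSpace.single_apply, if_neg this, mul_zero]
    rw [hrep]
    exact Submodule.sum_mem _ fun i hi =>
      Submodule.smul_mem _ _ (Submodule.subset_span ⟨i, hi, rfl⟩)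
  · rw [Submodule.span_le]
    rintro x ⟨i, hi, rfl⟩
    intro j hj
    have : j ≠ i := fun h => hj (h ▸ hi)
    show EuclideanSpace.single i (1:ℝ) j = 0
    rw [EuclideanSpace.single_apply, if_neg this]

lemma act_single {k : Matrix (Fin d) (Fin d) ℝ} (i : Fin d) :
    act k (EuclideanSpace.single i (1 : ℝ))
      = (EuclideanSpace.equiv (Fin d) ℝ).symm (fun j => k j i) := by
  ext j
  rw [act_apply]
  rw [show ((EuclideanSpace.equiv (Fin d) ℝ).symm (fun j => k j i)) j = k j i from rfl]
  rw [Finset.sum_eq_single i]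
  · simp [EuclideanSpace.single_apply]
  · intro m _ hmi; simp [EuclideanSpace.single_apply, hmi]
  · simp

lemma span_cols_eq {k : Matrix (Fin d) (Fin d) ℝ} (hk : k ∈ Matrix.unitaryGroup (Fin d) ℝ)
    (p : ℕ) :
    Submodule.span ℝ { x : Euc d | ∃ i : Fin d, (i : ℕ) < p ∧
        x = (EuclideanSpace.equiv (Fin d) ℝ).symm (fun j => k j i) }
      = (coordSub (loIdx d p)).map (uEquiv hk).toLinearMap := by
  rw [coordSub_eq_span, Submodule.map_span]
  congr 1
  ext x
  constructor
  · rintro ⟨i, hi, rfl⟩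
    refine ⟨EuclideanSpace.single i 1, ⟨i, mem_loIdx.2 hi, rfl⟩, ?_⟩
    show act k (EuclideanSpace.single i 1)
      = (EuclideanSpace.equiv (Fin d) ℝ).symm fun j => k j i
    exact act_single i
  · rintro ⟨y, ⟨i, hi, rfl⟩, rfl⟩
    refine ⟨i, mem_loIdx.1 hi, ?_⟩
    show act k (EuclideanSpace.single i 1)
      = (EuclideanSpace.equiv (Fin d) ℝ).symm fun j => k j i
    exact act_single i

theorem sv_svd {k l : Matrix (Fin d) (Fin d) ℝ} {σ : Fin d → ℝ}
    (hk : k ∈ Matrix.unitaryGroup (Fin d) ℝ) (hl : l ∈ Matrix.unitaryGroup (Fin d) ℝ)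
    (hσ : ∀ i j : Fin d, i ≤ j → σ j ≤ σ i) (hσ0 : ∀ i, 0 ≤ σ i) (iq : Fin d) :
    sv (k * Matrix.diagonal σ * l) ((iq : ℕ) + 1) = σ iq := by
  set A := k * Matrix.diagonal σ * l with hA
  have hlstar : star l ∈ Matrix.unitaryGroup (Fin d) ℝ := Unitary.star_mem hl
  have hnorm : ∀ v : Euc d, ‖act A v‖ = ‖act (Matrix.diagonal σ) (act l v)‖ := by
    intro v; rw [hA, act_mul, act_mul, norm_act_unitary hk]
  have hback : ∀ y : Euc d, act l (act (star l) y) = y := fun y => by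
    rw [← act_mul, hl.2, act_one]
  have hQmem : ∀ (s : Finset (Fin d)) (v : Euc d),
      v ∈ (coordSub s).map (uEquiv hlstar).toLinearMap → act l v ∈ coordSub s := by
    rintro s v ⟨y, hy, rfl⟩
    show act l (act (star l) y) ∈ coordSub s
    rw [hback]; exact hy
  apply le_antisymm
  · apply sv_le (by exact iq.isLt)
    intro P hP
    set s : Finset (Fin d) := (loIdx d (iq : ℕ))ᶜ with hs
    set Q := (coordSub s).map (uEquiv hlstar).toLinearMap with hQ
    have hQr : Module.finrank ℝ Q = d - (iq : ℕ) := by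
      rw [hQ, LinearEquiv.finrank_map_eq, finrank_coordSub, hs,
        card_compl_loIdx (le_of_lt iq.isLt)]
    have hsum := Submodule.finrank_sup_add_finrank_inf_eq P Q
    have hle : Module.finrank ℝ ↥(P ⊔ Q) ≤ d := by
      have := Submodule.finrank_le (P ⊔ Q)
      rwa [finrank_euclideanSpace_fin] at this
    have hPQ : 0 < Module.finrank ℝ ↥(P ⊓ Q) := by
      have hiq := iq.isLt
      omega
    obtain ⟨v, hv, h1⟩ := exists_unit_of_finrank_pos hPQ
    refine le_trans (minRestrict_le hv.1 h1) ?_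
    rw [hnorm]
    set x := act l v with hx
    have hxs : x ∈ coordSub s := hQmem s v hv.2
    have hx1 : ‖x‖ = 1 := by rw [hx, norm_act_unitary hl, h1]
    apply le_of_sq_le_sq (norm_nonneg _) (hσ0 iq)
    rw [norm_sq_act_diagonal]
    calc ∑ i, σ i ^ 2 * x i ^ 2 ≤ ∑ i, σ iq ^ 2 * x i ^ 2 := by
          apply Finset.sum_le_sum
          intro i _
          by_cases his : i ∈ s
          · have : iq ≤ i := by
              rw [hs, Finset.mem_compl, mem_loIdx] at his
              exact Fin.le_def.2 (not_lt.1 his)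
            have h2 : σ i ≤ σ iq := hσ iq i this
            have h3 : 0 ≤ σ i := hσ0 i
            exact mul_le_mul_of_nonneg_right (pow_le_pow_left₀ h3 h2 2) (sq_nonneg (x i))
          · rw [(mem_coordSub s x).1 hxs i his]
            simp
      _ = σ iq ^ 2 * ∑ i, x i ^ 2 := by rw [Finset.mul_sum]
      _ = σ iq ^ 2 := by rw [← norm_sq_euc, hx1]; ring
  · set s : Finset (Fin d) := loIdx d ((iq : ℕ) + 1) with hs
    set P₀ := (coordSub s).map (uEquiv hlstar).toLinearMap with hP₀
    have hP₀r : Module.finrank ℝ P₀ = (iq : ℕ) + 1 := by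
      rw [hP₀, LinearEquiv.finrank_map_eq, finrank_coordSub, hs, card_loIdx iq.isLt]
    refine le_trans ?_ (minRestrict_le_sv hP₀r)
    apply le_minRestrict (exists_unit_of_finrank_pos (by omega))
    intro v hvP h1
    rw [hnorm]
    set x := act l v with hx
    have hxs : x ∈ coordSub s := hQmem s v hvP
    have hx1 : ‖x‖ = 1 := by rw [hx, norm_act_unitary hl, h1]
    apply le_of_sq_le_sq (hσ0 iq) (norm_nonneg _)
    rw [norm_sq_act_diagonal]
    calc σ iq ^ 2 = σ iq ^ 2 * ∑ i, x i ^ 2 := by rw [← norm_sq_euc, hx1]; ring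
      _ = ∑ i, σ iq ^ 2 * x i ^ 2 := by rw [Finset.mul_sum]
      _ ≤ ∑ i, σ i ^ 2 * x i ^ 2 := by
          apply Finset.sum_le_sum
          intro i _
          by_cases his : i ∈ s
          · have : i ≤ iq := by
              rw [hs, mem_loIdx] at his
              exact Fin.le_def.2 (Nat.lt_succ_iff.1 his)
            have h2 : σ iq ≤ σ i := hσ i iq this
            have h3 : 0 ≤ σ iq := hσ0 iq
            exact mul_le_mul_of_nonneg_right (pow_le_pow_left₀ h3 h2 2) (sq_nonneg (x i))
          · rw [(mem_coordSub s x).1 hxs i his]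
            simp

end Aux3
section Aux4
variable {d : ℕ}

lemma star_mat_eq (M : Matrix (Fin d) (Fin d) ℝ) : star M = Mᵀ := by
  ext i j
  simp [Matrix.star_apply, Matrix.transpose_apply]

lemma star_diagonal (f : Fin d → ℝ) :
    star (Matrix.diagonal f) = Matrix.diagonal f := by
  rw [star_mat_eq, Matrix.diagonal_transpose]

/-- permutation matrix: column `j` is the basis vector `e j` -/
def permM (e : Equiv.Perm (Fin d)) : Matrix (Fin d) (Fin d) ℝ :=
  Matrix.of fun i j => if i = e j then 1 else 0

lemma permM_mul_permMT (e : Equiv.Perm (Fin d)) : permM e * (permM e)ᵀ = 1 := by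
  ext i j
  rw [Matrix.mul_apply]
  rw [Finset.sum_eq_single (e⁻¹ i)]
  · by_cases h : i = j <;>
      simp [permM, Matrix.transpose_apply, h, Matrix.one_apply, Equiv.apply_symm_apply,
        eq_comm]
  · intro a _ ha
    have : i ≠ e a := fun h => ha (by rw [h]; simp)
    simp [permM, Matrix.transpose_apply, this]
  · simp

lemma permMT_mul_permM (e : Equiv.Perm (Fin d)) : (permM e)ᵀ * permM e = 1 := by
  ext i j
  rw [Matrix.mul_apply]
  rw [Finset.sum_eq_single (e i)]
  · by_cases h : i = j <;>
      simp [permM, Matrix.transpose_apply, h, Matrix.one_apply, eq_comm]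
  · intro a _ ha
    have h1 : a ≠ e i := fun h => ha h
    simp [permM, Matrix.transpose_apply]
    intro h'
    exact fun h'' => absurd h'' h1
  · simp

lemma permM_mem (e : Equiv.Perm (Fin d)) : permM e ∈ Matrix.unitaryGroup (Fin d) ℝ := by
  constructor
  · rw [star_mat_eq]; exact permMT_mul_permM e
  · rw [star_mat_eq]; exact permM_mul_permMT e

lemma permM_diag_permMT (e : Equiv.Perm (Fin d)) (f : Fin d → ℝ) :
    permM e * Matrix.diagonal (f ∘ e) * (permM e)ᵀ = Matrix.diagonal f := by
  ext i j
  rw [Matrix.mul_apply]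
  have hterm : ∀ a : Fin d, (permM e * Matrix.diagonal (f ∘ e)) i a * (permM e)ᵀ a j
      = (if i = e a then f (e a) else 0) * (if j = e a then 1 else 0) := by
    intro a
    rw [Matrix.mul_apply, Finset.sum_eq_single a]
    · by_cases h : i = e a <;> simp [permM, Matrix.diagonal_apply, h]
    · intro b _ hb
      simp only [permM, Matrix.of_apply, Matrix.diagonal_apply]
      rw [if_neg hb, mul_zero]
    · simp
  rw [Finset.sum_congr rfl fun a _ => hterm a]
  rw [Finset.sum_eq_single (e⁻¹ i)]
  · by_cases h : i = j <;>
      simp [Matrix.diagonal_apply, h, Equiv.apply_symm_apply, eq_comm]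
  · intro a _ ha
    have : i ≠ e a := fun h => ha (by rw [h]; simp)
    simp [this]
  · simp

lemma diag_eq_permM (e : Equiv.Perm (Fin d)) (f : Fin d → ℝ) :
    Matrix.diagonal f = permM e * Matrix.diagonal (f ∘ e) * star (permM e) := by
  rw [star_mat_eq, permM_diag_permMT]

lemma dotProduct_self_pos {y : Fin d → ℝ} (hy : y ≠ 0) : 0 < y ⬝ᵥ y := by
  obtain ⟨j, hj⟩ : ∃ j, y j ≠ 0 := by
    by_contra h
    push_neg at h
    exact hy (funext h)
  exact Finset.sum_pos' (fun i _ => mul_self_nonneg _)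
    ⟨j, Finset.mem_univ j, lt_of_le_of_ne (mul_self_nonneg _) (Ne.symm (mul_self_ne_zero.2 hj))⟩

theorem exists_svd (g : GL (Fin d) ℝ) :
    ∃ k l : Matrix (Fin d) (Fin d) ℝ, ∃ σ : Fin d → ℝ,
      k ∈ Matrix.unitaryGroup (Fin d) ℝ ∧ l ∈ Matrix.unitaryGroup (Fin d) ℝ ∧
      (∀ i j : Fin d, i ≤ j → σ j ≤ σ i) ∧ (∀ i, 0 < σ i) ∧
      mat g = k * Matrix.diagonal σ * l := by
  classical
  set A : Matrix (Fin d) (Fin d) ℝ := mat g with hAdef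
  have hABA : A * mat g⁻¹ = 1 := by
    rw [hAdef]
    show (↑g : Matrix (Fin d) (Fin d) ℝ) * (↑(g⁻¹) : Matrix (Fin d) (Fin d) ℝ) = 1
    rw [← Units.val_mul, mul_inv_cancel, Units.val_one]
  have hH : (A * Aᴴ).IsHermitian := Matrix.isHermitian_mul_conjTranspose_self A
  have hPD : (A * Aᴴ).PosDef := by
    refine Matrix.PosDef.of_dotProduct_mulVec_pos hH fun x hx => ?_
    have hy : Aᵀ *ᵥ x ≠ 0 := by
      intro h0
      have hvm : x ᵥ* A = 0 := by
        rw [← Matrix.mulVec_transpose]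
        exact h0
      have : x ᵥ* (A * mat g⁻¹) = 0 := by
        rw [← Matrix.vecMul_vecMul, hvm, Matrix.zero_vecMul]
      rw [hABA, Matrix.vecMul_one] at this
      exact hx this
    have hconj : Aᴴ = Aᵀ := by
      ext i j; simp [Matrix.conjTranspose_apply]
    have hsx : star x = x := by
      funext i; simp
    have hstep : star x ⬝ᵥ ((A * Aᴴ) *ᵥ x) = (Aᵀ *ᵥ x) ⬝ᵥ (Aᵀ *ᵥ x) := by
      rw [hsx, ← Matrix.mulVec_mulVec, Matrix.dotProduct_mulVec, hconj]
      simp only [Matrix.mulVec_transpose]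
    rw [hstep]
    exact dotProduct_self_pos hy
  set μ : Fin d → ℝ := hH.eigenvalues with hμ
  have hμpos : ∀ i, 0 < μ i := hPD.eigenvalues_pos
  set U : Matrix (Fin d) (Fin d) ℝ := (hH.eigenvectorUnitary : Matrix (Fin d) (Fin d) ℝ)
    with hU
  have hUmem : U ∈ Matrix.unitaryGroup (Fin d) ℝ := hH.eigenvectorUnitary.2
  have hspec : A * Aᴴ = U * Matrix.diagonal μ * star U := by
    have := hH.spectral_theorem
    rw [this, Unitary.conjStarAlgAut_apply]; rfl
  set e : Equiv.Perm (Fin d) := (Fin.revPerm : Equiv.Perm (Fin d)).trans (Tuple.sort μ)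
    with he
  set τ : Fin d → ℝ := μ ∘ e with hτ
  have hτanti : ∀ i j : Fin d, i ≤ j → τ j ≤ τ i := by
    intro i j hij
    have hmono := Tuple.monotone_sort μ
    have : Fin.rev j ≤ Fin.rev i := Fin.rev_le_rev.2 hij
    exact hmono this
  have hτpos : ∀ i, 0 < τ i := fun i => hμpos _
  set k₀ : Matrix (Fin d) (Fin d) ℝ := U * permM e with hk₀
  have hk₀mem : k₀ ∈ Matrix.unitaryGroup (Fin d) ℝ := mul_mem hUmem (permM_mem e)
  have hAAt : A * Aᴴ = k₀ * Matrix.diagonal τ * star k₀ := by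
    rw [hspec, diag_eq_permM e μ, hk₀, star_mul]
    simp only [mul_assoc, hτ]
  set σ : Fin d → ℝ := fun i => Real.sqrt (τ i) with hσdef
  have hσpos : ∀ i, 0 < σ i := fun i => Real.sqrt_pos.2 (hτpos i)
  have hσanti : ∀ i j : Fin d, i ≤ j → σ j ≤ σ i := fun i j hij =>
    Real.sqrt_le_sqrt (hτanti i j hij)
  have hσsq : Matrix.diagonal σ * Matrix.diagonal σ = Matrix.diagonal τ := by
    rw [Matrix.diagonal_mul_diagonal]
    exact congrArg Matrix.diagonal (funext fun i => Real.mul_self_sqrt (hτpos i).le)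
  set l : Matrix (Fin d) (Fin d) ℝ :=
    Matrix.diagonal (fun i => (σ i)⁻¹) * star k₀ * A with hl
  have hinv1 : Matrix.diagonal σ * Matrix.diagonal (fun i => (σ i)⁻¹) = 1 := by
    rw [Matrix.diagonal_mul_diagonal]
    rw [show (fun i => σ i * (σ i)⁻¹) = fun _ => (1:ℝ) from
      funext fun i => mul_inv_cancel₀ (hσpos i).ne', Matrix.diagonal_one]
  have hinv2 : Matrix.diagonal (fun i => (σ i)⁻¹) * Matrix.diagonal σ = 1 := by
    rw [Matrix.diagonal_mul_diagonal]
    rw [show (fun i => (σ i)⁻¹ * σ i) = fun _ => (1:ℝ) from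
      funext fun i => inv_mul_cancel₀ (hσpos i).ne', Matrix.diagonal_one]
  have hfact : A = k₀ * Matrix.diagonal σ * l := by
    rw [hl]
    calc A = (k₀ * star k₀) * A := by rw [hk₀mem.2, one_mul]
      _ = k₀ * (Matrix.diagonal σ * Matrix.diagonal (fun i => (σ i)⁻¹)) * star k₀ * A := by
          rw [hinv1, mul_one]
      _ = k₀ * Matrix.diagonal σ * (Matrix.diagonal (fun i => (σ i)⁻¹) * star k₀ * A) := by
          simp only [mul_assoc]
  have hlmem : l ∈ Matrix.unitaryGroup (Fin d) ℝ := by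
    rw [Matrix.mem_unitaryGroup_iff]
    have hstarl : star l = star A * k₀ * Matrix.diagonal (fun i => (σ i)⁻¹) := by
      rw [hl, star_mul, star_mul, star_star, star_diagonal]
      simp only [mul_assoc]
    have hAsA : star k₀ * (A * star A) * k₀ = Matrix.diagonal τ := by
      rw [show star A = Aᴴ from rfl, hAAt]
      calc star k₀ * (k₀ * Matrix.diagonal τ * star k₀) * k₀
          = (star k₀ * k₀) * Matrix.diagonal τ * (star k₀ * k₀) := by
            simp only [mul_assoc]
        _ = Matrix.diagonal τ := by rw [hk₀mem.1, one_mul, mul_one]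
    calc l * star l = Matrix.diagonal (fun i => (σ i)⁻¹) * (star k₀ * (A * star A) * k₀)
          * Matrix.diagonal (fun i => (σ i)⁻¹) := by rw [hl, hstarl]; simp only [mul_assoc]
      _ = Matrix.diagonal (fun i => (σ i)⁻¹) * (Matrix.diagonal σ * Matrix.diagonal σ)
          * Matrix.diagonal (fun i => (σ i)⁻¹) := by rw [hAsA, hσsq]
      _ = (Matrix.diagonal (fun i => (σ i)⁻¹) * Matrix.diagonal σ)
          * (Matrix.diagonal σ * Matrix.diagonal (fun i => (σ i)⁻¹)) := by
            simp only [mul_assoc]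
      _ = 1 := by rw [hinv1, hinv2, one_mul]
  exact ⟨k₀, l, σ, hk₀mem, hlmem, hσanti, hσpos, hfact⟩

end Aux4
section Aux5
variable {d : ℕ}

lemma isUnit_of_unitary {k : Matrix (Fin d) (Fin d) ℝ}
    (hk : k ∈ Matrix.unitaryGroup (Fin d) ℝ) : IsUnit k :=
  ⟨⟨k, star k, hk.2, hk.1⟩, rfl⟩

lemma attractor_spec (g : GL (Fin d) ℝ) (q : ℕ) :
    IsCartanAttractor (mat g) q (cartanAttractor (mat g) q) := by
  have hex : ∃ U, IsCartanAttractor (mat g) q U := by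
    obtain ⟨k, l, σ, hk, hl, hanti, hpos, hfact⟩ := exists_svd g
    exact ⟨_, k, l, σ, hk, hl, hanti, fun i => (hpos i).le, hfact, rfl⟩
  simp only [cartanAttractor]
  rw [dif_pos hex]
  exact hex.choose_spec

lemma mat_mul_mat_inv (g : GL (Fin d) ℝ) : mat g * mat g⁻¹ = 1 := by
  show (↑g : Matrix (Fin d) (Fin d) ℝ) * (↑(g⁻¹) : Matrix (Fin d) (Fin d) ℝ) = 1
  rw [← Units.val_mul, mul_inv_cancel, Units.val_one]

lemma mat_inv_mul_mat (g : GL (Fin d) ℝ) : mat g⁻¹ * mat g = 1 := by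
  show (↑(g⁻¹) : Matrix (Fin d) (Fin d) ℝ) * (↑g : Matrix (Fin d) (Fin d) ℝ) = 1
  rw [← Units.val_mul, inv_mul_cancel, Units.val_one]

lemma sigma_pos (g : GL (Fin d) ℝ) {k l : Matrix (Fin d) (Fin d) ℝ} {σ : Fin d → ℝ}
    (hk : k ∈ Matrix.unitaryGroup (Fin d) ℝ) (hl : l ∈ Matrix.unitaryGroup (Fin d) ℝ)
    (hσ0 : ∀ i, 0 ≤ σ i) (hfact : mat g = k * Matrix.diagonal σ * l) (i : Fin d) :
    0 < σ i := by
  have hD : Matrix.diagonal σ = star k * mat g * star l := by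
    rw [hfact]
    symm
    calc star k * (k * Matrix.diagonal σ * l) * star l
        = (star k * k) * Matrix.diagonal σ * (l * star l) := by simp only [mul_assoc]
      _ = Matrix.diagonal σ := by rw [hk.1, hl.2, one_mul, mul_one]
  have hunit : IsUnit (Matrix.diagonal σ) := by
    rw [hD]
    exact ((isUnit_of_unitary (Unitary.star_mem hk)).mul g.isUnit).mul
      (isUnit_of_unitary (Unitary.star_mem hl))
  have hdet : IsUnit (Matrix.diagonal σ).det := (Matrix.isUnit_iff_isUnit_det _).1 hunit
  rw [Matrix.det_diagonal] at hdet
  have hne : ∀ j ∈ Finset.univ, σ j ≠ 0 := Finset.prod_ne_zero_iff.1 hdet.ne_zero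
  exact lt_of_le_of_ne (hσ0 i) (Ne.symm (hne i (Finset.mem_univ i)))

/-- singular values of the inverse -/
lemma sv_inv (g : GL (Fin d) ℝ) {k l : Matrix (Fin d) (Fin d) ℝ} {σ : Fin d → ℝ}
    (hk : k ∈ Matrix.unitaryGroup (Fin d) ℝ) (hl : l ∈ Matrix.unitaryGroup (Fin d) ℝ)
    (hanti : ∀ i j : Fin d, i ≤ j → σ j ≤ σ i) (hσ0 : ∀ i, 0 ≤ σ i)
    (hfact : mat g = k * Matrix.diagonal σ * l) (iq : Fin d) :
    sv (mat g⁻¹) ((iq : ℕ) + 1) = (σ (Fin.rev iq))⁻¹ := by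
  have hpos : ∀ i, 0 < σ i := sigma_pos g hk hl hσ0 hfact
  have hinv2 : Matrix.diagonal (fun i => (σ i)⁻¹) * Matrix.diagonal σ = 1 := by
    rw [Matrix.diagonal_mul_diagonal,
      show (fun i => (σ i)⁻¹ * σ i) = fun _ => (1:ℝ) from
        funext fun i => inv_mul_cancel₀ (hpos i).ne', Matrix.diagonal_one]
  set M : Matrix (Fin d) (Fin d) ℝ :=
    star l * Matrix.diagonal (fun i => (σ i)⁻¹) * star k with hM
  have hMg : M * mat g = 1 := by
    rw [hM, hfact]
    calc star l * Matrix.diagonal (fun i => (σ i)⁻¹) * star k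
          * (k * Matrix.diagonal σ * l)
        = star l * (Matrix.diagonal (fun i => (σ i)⁻¹)
            * ((star k * k) * Matrix.diagonal σ)) * l := by simp only [mul_assoc]
      _ = star l * l := by rw [hk.1, one_mul, hinv2, mul_one]
      _ = 1 := hl.1
  have hmatinv : mat g⁻¹ = M := by
    calc mat g⁻¹ = 1 * mat g⁻¹ := (one_mul _).symm
      _ = M * mat g * mat g⁻¹ := by rw [hMg]
      _ = M * (mat g * mat g⁻¹) := by simp only [mul_assoc]
      _ = M := by rw [mat_mul_mat_inv, mul_one]
  have hdiag : Matrix.diagonal (fun i => (σ i)⁻¹)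
      = permM (Fin.revPerm : Equiv.Perm (Fin d))
        * Matrix.diagonal ((fun i => (σ i)⁻¹) ∘ (Fin.revPerm : Equiv.Perm (Fin d)))
        * star (permM (Fin.revPerm : Equiv.Perm (Fin d))) :=
    diag_eq_permM _ _
  have hfact2 : mat g⁻¹ = (star l * permM (Fin.revPerm : Equiv.Perm (Fin d)))
      * Matrix.diagonal (fun i => (σ (Fin.rev i))⁻¹)
      * (star (permM (Fin.revPerm : Equiv.Perm (Fin d))) * star k) := by
    rw [hmatinv, hM, hdiag]
    simp only [mul_assoc]
    rfl
  rw [hfact2]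
  have hanti' : ∀ i j : Fin d, i ≤ j → (σ (Fin.rev j))⁻¹ ≤ (σ (Fin.rev i))⁻¹ := by
    intro i j hij
    have h1 : Fin.rev j ≤ Fin.rev i := Fin.rev_le_rev.2 hij
    exact inv_anti₀ (hpos _) (hanti _ _ h1)
  have h0' : ∀ i : Fin d, 0 ≤ (σ (Fin.rev i))⁻¹ := fun i => (inv_pos.2 (hpos _)).le
  exact sv_svd (mul_mem (Unitary.star_mem hl) (permM_mem _))
    (mul_mem (Unitary.star_mem (permM_mem _)) (Unitary.star_mem hk)) hanti' h0' iq

end Aux5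
section Aux6
open InnerProductGeometry Real
variable {d : ℕ}

lemma key_bound {k' : Matrix (Fin d) (Fin d) ℝ} (hk' : k' ∈ Matrix.unitaryGroup (Fin d) ℝ)
    {V : Submodule ℝ (Euc d)} {q : ℕ}
    (hV : V = (coordSub (loIdx d q)).map (uEquiv hk').toLinearMap)
    {α : ℝ} (hαpos : 0 < α) (hαhalf : α ≤ π / 2)
    {y : Euc d} (hy1 : ‖y‖ = 1)
    (hang : ∀ w ∈ V, w ≠ 0 → α ≤ InnerProductGeometry.angle y w) :
    Real.sin α ^ 2 ≤ ∑ i ∈ (loIdx d q)ᶜ, (act (star k') y i) ^ 2 := by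
  set s := loIdx d q with hs
  set u : Euc d := act (star k') y with hu
  have hu1 : ‖u‖ = 1 := by rw [hu, norm_act_unitary (Unitary.star_mem hk'), hy1]
  have hysplit : ∑ i ∈ s, u i ^ 2 + ∑ i ∈ sᶜ, u i ^ 2 = 1 := by
    rw [Finset.sum_add_sum_compl]
    rw [← norm_sq_euc, hu1]; norm_num
  set uminus : Euc d := WithLp.toLp 2 (fun i => if i ∈ s then u i else 0 : Fin d → ℝ) with hum
  have hmem : uminus ∈ coordSub s := fun i hi => by simp [hum, hi]
  have hnormu : ‖uminus‖ ^ 2 = ∑ i ∈ s, u i ^ 2 := by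
    rw [norm_sq_euc]
    have hptw : ∀ i, uminus i ^ 2 = if i ∈ s then u i ^ 2 else 0 := fun i => by
      by_cases hi : i ∈ s <;> simp [hum, hi]
    rw [Finset.sum_congr rfl fun i _ => hptw i, Finset.sum_ite_mem, Finset.univ_inter]
  by_cases h0 : uminus = 0
  · have : ∑ i ∈ s, u i ^ 2 = 0 := by rw [← hnormu, h0]; simp
    rw [this, zero_add] at hysplit
    rw [hysplit]
    exact Real.sin_sq_le_one α
  · set w₀ : Euc d := act k' uminus with hw₀
    have hw₀V : w₀ ∈ V := by
      rw [hV]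
      exact ⟨uminus, hmem, rfl⟩
    have hnw₀ : ‖w₀‖ = ‖uminus‖ := norm_act_unitary hk' _
    have hw₀ne : w₀ ≠ 0 := by
      intro hc
      apply h0
      rw [← norm_eq_zero, ← hnw₀, hc, norm_zero]
    have hinner : ⟪y, w₀⟫ = ‖uminus‖ ^ 2 := by
      have hyu : y = act k' u := (act_star_act hk' y).symm
      rw [hw₀]
      nth_rewrite 1 [hyu]
      rw [inner_act_act hk', inner_euc, norm_sq_euc]
      refine Finset.sum_congr rfl fun i _ => ?_
      by_cases hi : i ∈ s <;> simp [hum, hi] <;> ring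
    set θ := InnerProductGeometry.angle y w₀ with hθdef
    have hθ := hang w₀ hw₀V hw₀ne
    have hcos : Real.cos θ = ‖uminus‖ := by
      rw [hθdef, InnerProductGeometry.cos_angle, hinner, hy1, one_mul, hnw₀, sq,
        mul_div_assoc, div_self (by rwa [← hnw₀, norm_ne_zero_iff] ), mul_one]
    have hum0 : 0 < ‖uminus‖ := by
      rw [norm_pos_iff]; exact fun hc => hw₀ne (by rw [hw₀, hc]; simp [act])
    have hθhalf : θ ≤ π / 2 := by
      by_contra hc
      push_neg at hc
      have h1 : θ < π + π / 2 :=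
        lt_of_le_of_lt (InnerProductGeometry.angle_le_pi y w₀) (by linarith [Real.pi_pos])
      have := Real.cos_neg_of_pi_div_two_lt_of_lt hc h1
      rw [hcos] at this
      linarith
    have hθ0 : 0 ≤ θ := InnerProductGeometry.angle_nonneg y w₀
    have hsin : Real.sin α ≤ Real.sin θ := by
      rcases eq_or_lt_of_le hθ with he | hlt
      · rw [he]
      · exact le_of_lt (Real.strictMonoOn_sin
          ⟨by linarith, hαhalf⟩ ⟨by linarith, hθhalf⟩ hlt)
    have hsina : 0 ≤ Real.sin α := Real.sin_nonneg_of_nonneg_of_le_pi hαpos.le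
      (by linarith [Real.pi_pos])
    have hsq : Real.sin θ ^ 2 = 1 - ‖uminus‖ ^ 2 := by
      have := Real.sin_sq_add_cos_sq θ
      rw [hcos] at this
      linarith
    calc Real.sin α ^ 2 ≤ Real.sin θ ^ 2 := pow_le_pow_left₀ hsina hsin 2
      _ = 1 - ‖uminus‖ ^ 2 := hsq
      _ = ∑ i ∈ sᶜ, u i ^ 2 := by rw [hnormu]; linarith

theorem part1 (p : ℕ) (hp1 : 1 ≤ p) (hpd : p ≤ d - 1) (g h : GL (Fin d) ℝ)
    (α : ℝ) (hαpos : 0 < α)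
    (hang : ∀ v ∈ cartanAttractor (mat h) p, v ≠ 0 →
      ∀ w ∈ cartanAttractor (mat g⁻¹) (d - p), w ≠ 0 →
        α ≤ InnerProductGeometry.angle v w) :
    Real.sin α * sv (mat g) p * sv (mat h) p ≤ sv (mat (g * h)) p := by
  have hd2 : 2 ≤ d := by omega
  have hpd' : p ≤ d := by omega
  have hdp1 : 1 ≤ d - p := by omega
  obtain ⟨kh, lh, σh, hkh, hlh, hσh, hσh0, hfacth, hUh⟩ := attractor_spec h p
  obtain ⟨k', l', σ', hk', hl', hσ', hσ'0, hfact', hV⟩ := attractor_spec g⁻¹ (d - p)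
  rw [span_cols_eq hkh p] at hUh
  rw [span_cols_eq hk' (d - p)] at hV
  have hposh : ∀ i, 0 < σh i := sigma_pos h hkh hlh hσh0 hfacth
  have hpos' : ∀ i, 0 < σ' i := sigma_pos g⁻¹ hk' hl' hσ'0 hfact'
  set ip : Fin d := ⟨p - 1, by omega⟩ with hip
  have hipv : (ip : ℕ) + 1 = p := by simp [hip]; omega
  have hrevip : ((Fin.rev ip : Fin d) : ℕ) = d - p := by
    rw [Fin.val_rev]; simp [hip]; omega
  -- singular values
  have hsvh : sv (mat h) p = σh ip := by
    have := sv_svd hkh hlh hσh hσh0 ip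
    rw [hipv] at this
    rw [← hfacth] at this
    exact this
  have hsvg : sv (mat g) p = (σ' (Fin.rev ip))⁻¹ := by
    have := sv_inv g⁻¹ hk' hl' hσ' hσ'0 hfact' ip
    rw [hipv, inv_inv] at this
    exact this
  have hsvgpos : 0 < sv (mat g) p := by rw [hsvg]; exact inv_pos.2 (hpos' _)
  have hsvhpos : 0 < sv (mat h) p := by rw [hsvh]; exact hposh ip
  -- finranks of attractors
  have hUr : Module.finrank ℝ (cartanAttractor (mat h) p) = p := by
    rw [hUh, LinearEquiv.finrank_map_eq, finrank_coordSub, card_loIdx hpd']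
  have hVr : Module.finrank ℝ (cartanAttractor (mat g⁻¹) (d - p)) = d - p := by
    rw [hV, LinearEquiv.finrank_map_eq, finrank_coordSub, card_loIdx (by omega)]
  -- α ≤ π/2
  have hαhalf : α ≤ π / 2 := by
    obtain ⟨v, hvU, hv1⟩ := exists_unit_of_finrank_pos (hUr ▸ (by omega : 0 < p))
    obtain ⟨w, hwV, hw1⟩ := exists_unit_of_finrank_pos (hVr ▸ (by omega : 0 < d - p))
    have hv0 : v ≠ 0 := by intro hc; rw [hc, norm_zero] at hv1; norm_num at hv1
    have hw0 : w ≠ 0 := by intro hc; rw [hc, norm_zero] at hw1; norm_num at hw1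
    have h1 := hang v hvU hv0 w hwV hw0
    have h2 := hang v hvU hv0 (-w) (Submodule.neg_mem _ hwV) (neg_ne_zero.2 hw0)
    rw [InnerProductGeometry.angle_neg_right] at h2
    have := InnerProductGeometry.angle_le_pi v w
    linarith
  have hsina : 0 ≤ Real.sin α := Real.sin_nonneg_of_nonneg_of_le_pi hαpos.le
    (by linarith [Real.pi_pos])
  -- the key estimate: g expands unit vectors of U_h by at least sin α * σ_p(g)
  have hmatg : mat g = star l' * Matrix.diagonal (fun i => (σ' i)⁻¹) * star k' := by
    have hinv2 : Matrix.diagonal (fun i => (σ' i)⁻¹) * Matrix.diagonal σ' = 1 := by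
      rw [Matrix.diagonal_mul_diagonal,
        show (fun i => (σ' i)⁻¹ * σ' i) = fun _ => (1:ℝ) from
          funext fun i => inv_mul_cancel₀ (hpos' i).ne', Matrix.diagonal_one]
    have hMg : (star l' * Matrix.diagonal (fun i => (σ' i)⁻¹) * star k') * mat g⁻¹ = 1 := by
      rw [hfact']
      calc star l' * Matrix.diagonal (fun i => (σ' i)⁻¹) * star k'
            * (k' * Matrix.diagonal σ' * l')
          = star l' * (Matrix.diagonal (fun i => (σ' i)⁻¹)
              * ((star k' * k') * Matrix.diagonal σ')) * l' := by simp only [mul_assoc]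
        _ = star l' * l' := by rw [hk'.1, one_mul, hinv2, mul_one]
        _ = 1 := hl'.1
    calc mat g = 1 * mat g := (one_mul _).symm
      _ = (star l' * Matrix.diagonal (fun i => (σ' i)⁻¹) * star k') * mat g⁻¹ * mat g := by
          rw [hMg]
      _ = (star l' * Matrix.diagonal (fun i => (σ' i)⁻¹) * star k')
          * (mat g⁻¹ * mat g) := by simp only [mul_assoc]
      _ = _ := by rw [mat_inv_mul_mat, mul_one]
  have hkey : ∀ y : Euc d, ‖y‖ = 1 → y ∈ cartanAttractor (mat h) p →
      Real.sin α * sv (mat g) p ≤ ‖act (mat g) y‖ := by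
    intro y hy1 hyU
    have hy0 : y ≠ 0 := by intro hc; rw [hc, norm_zero] at hy1; norm_num at hy1
    have hsum := key_bound hk' hV hαpos hαhalf hy1
      (fun w hw hw0 => hang y hyU hy0 w hw hw0)
    set u : Euc d := act (star k') y with hu
    have hnormy : ‖act (mat g) y‖ = ‖act (Matrix.diagonal (fun i => (σ' i)⁻¹)) u‖ := by
      rw [hmatg, act_mul, act_mul, norm_act_unitary (Unitary.star_mem hl')]
    apply le_of_sq_le_sq (mul_nonneg hsina hsvgpos.le) (norm_nonneg _)
    rw [hnormy, norm_sq_act_diagonal]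
    have hsub : ∑ i ∈ (loIdx d (d - p))ᶜ, ((σ' i)⁻¹) ^ 2 * u i ^ 2
        ≤ ∑ i, ((σ' i)⁻¹) ^ 2 * u i ^ 2 := by
      apply Finset.sum_le_sum_of_subset_of_nonneg (Finset.subset_univ _)
      intro i _ _
      positivity
    have hterm : ∀ i ∈ (loIdx d (d - p))ᶜ,
        ((σ' (Fin.rev ip))⁻¹) ^ 2 * u i ^ 2 ≤ ((σ' i)⁻¹) ^ 2 * u i ^ 2 := by
      intro i hi
      rw [Finset.mem_compl, mem_loIdx, not_lt] at hi
      have hle : Fin.rev ip ≤ i := by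
        rw [Fin.le_def, hrevip]; exact hi
      have h1 : σ' i ≤ σ' (Fin.rev ip) := hσ' _ _ hle
      have h2 : (σ' (Fin.rev ip))⁻¹ ≤ (σ' i)⁻¹ := inv_anti₀ (hpos' i) h1
      exact mul_le_mul_of_nonneg_right
        (pow_le_pow_left₀ (inv_pos.2 (hpos' _)).le h2 2) (sq_nonneg _)
    calc (Real.sin α * sv (mat g) p) ^ 2
        = (sv (mat g) p) ^ 2 * Real.sin α ^ 2 := by ring
      _ ≤ (sv (mat g) p) ^ 2 * ∑ i ∈ (loIdx d (d - p))ᶜ, u i ^ 2 := by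
          apply mul_le_mul_of_nonneg_left hsum (sq_nonneg _)
      _ = ∑ i ∈ (loIdx d (d - p))ᶜ, ((σ' (Fin.rev ip))⁻¹) ^ 2 * u i ^ 2 := by
          rw [Finset.mul_sum, hsvg]
      _ ≤ ∑ i ∈ (loIdx d (d - p))ᶜ, ((σ' i)⁻¹) ^ 2 * u i ^ 2 :=
          Finset.sum_le_sum hterm
      _ ≤ ∑ i, ((σ' i)⁻¹) ^ 2 * u i ^ 2 := hsub
  -- the subspace W = l_h⁻¹ (coord span)
  have hlhstar : star lh ∈ Matrix.unitaryGroup (Fin d) ℝ := Unitary.star_mem hlh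
  set W := (coordSub (loIdx d p)).map (uEquiv hlhstar).toLinearMap with hW
  have hWr : Module.finrank ℝ W = p := by
    rw [hW, LinearEquiv.finrank_map_eq, finrank_coordSub, card_loIdx hpd']
  refine le_trans ?_ (minRestrict_le_sv hWr)
  apply le_minRestrict (exists_unit_of_finrank_pos (hWr ▸ (by omega : 0 < p)))
  intro v hvW hv1
  set x : Euc d := act lh v with hx
  have hxs : x ∈ coordSub (loIdx d p) := by
    obtain ⟨z, hz, rfl⟩ := hvW
    show act lh (act (star lh) z) ∈ _
    rw [← act_mul, hlh.2, act_one]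
    exact hz
  have hx1 : ‖x‖ = 1 := by rw [hx, norm_act_unitary hlh, hv1]
  set z : Euc d := act (Matrix.diagonal σh) x with hz
  have hzs : z ∈ coordSub (loIdx d p) := by
    intro i hi
    rw [hz, act_diagonal, (mem_coordSub _ x).1 hxs i hi, mul_zero]
  have hact : act (mat h) v = act kh z := by
    rw [hfacth, act_mul, act_mul, ← hx, ← hz]
  have hnz : sv (mat h) p ≤ ‖z‖ := by
    rw [hsvh]
    apply le_of_sq_le_sq (hposh ip).le (norm_nonneg _)
    rw [hz, norm_sq_act_diagonal]
    calc σh ip ^ 2 = σh ip ^ 2 * ∑ i, x i ^ 2 := by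
          rw [← norm_sq_euc, hx1]; ring
      _ = ∑ i, σh ip ^ 2 * x i ^ 2 := by rw [Finset.mul_sum]
      _ ≤ ∑ i, σh i ^ 2 * x i ^ 2 := by
          apply Finset.sum_le_sum
          intro i _
          by_cases his : i ∈ loIdx d p
          · have hle : i ≤ ip := by
              rw [Fin.le_def]
              have := mem_loIdx.1 his
              simp [hip]; omega
            exact mul_le_mul_of_nonneg_right
              (pow_le_pow_left₀ (hposh ip).le (hσh _ _ hle) 2) (sq_nonneg _)
          · rw [(mem_coordSub _ x).1 hxs i his]
            simp
  have hnzpos : 0 < ‖z‖ := lt_of_lt_of_le hsvhpos hnz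
  have hhvU : act (mat h) v ∈ cartanAttractor (mat h) p := by
    rw [hact, hUh]
    exact ⟨z, hzs, rfl⟩
  have hnhv : ‖act (mat h) v‖ = ‖z‖ := by rw [hact, norm_act_unitary hkh]
  set y : Euc d := ‖z‖⁻¹ • act (mat h) v with hy
  have hyU : y ∈ cartanAttractor (mat h) p := Submodule.smul_mem _ _ hhvU
  have hy1 : ‖y‖ = 1 := by
    rw [hy, norm_smul, Real.norm_eq_abs, abs_of_nonneg (inv_nonneg.2 hnzpos.le), hnhv,
      inv_mul_cancel₀ hnzpos.ne']
  have hmatgh : mat (g * h) = mat g * mat h := rfl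
  have hrecover : act (mat h) v = ‖z‖ • y := by
    rw [hy, smul_smul, mul_inv_cancel₀ hnzpos.ne', one_smul]
  calc Real.sin α * sv (mat g) p * sv (mat h) p
      ≤ Real.sin α * sv (mat g) p * ‖z‖ := by
        apply mul_le_mul_of_nonneg_left hnz (mul_nonneg hsina hsvgpos.le)
    _ ≤ ‖act (mat g) y‖ * ‖z‖ := by
        apply mul_le_mul_of_nonneg_right (hkey y hy1 hyU) hnzpos.le
    _ = ‖act (mat (g * h)) v‖ := by
        rw [hmatgh, act_mul, hrecover, norm_act_smul _ _ hnzpos.le, mul_comm]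

end Aux6
section Aux7
open InnerProductGeometry Real
variable {d : ℕ}

lemma alpha_half (p : ℕ) (hp1 : 1 ≤ p) (hpd : p ≤ d - 1) (g h : GL (Fin d) ℝ)
    {α : ℝ}
    (hang : ∀ v ∈ cartanAttractor (mat h) p, v ≠ 0 →
      ∀ w ∈ cartanAttractor (mat g⁻¹) (d - p), w ≠ 0 →
        α ≤ InnerProductGeometry.angle v w) :
    α ≤ π / 2 := by
  have hd2 : 2 ≤ d := by omega
  have hpd' : p ≤ d := by omega
  obtain ⟨kh, lh, σh, hkh, hlh, hσh, hσh0, hfacth, hUh⟩ := attractor_spec h p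
  obtain ⟨k', l', σ', hk', hl', hσ', hσ'0, hfact', hV⟩ := attractor_spec g⁻¹ (d - p)
  rw [span_cols_eq hkh p] at hUh
  rw [span_cols_eq hk' (d - p)] at hV
  have hUr : Module.finrank ℝ (cartanAttractor (mat h) p) = p := by
    rw [hUh, LinearEquiv.finrank_map_eq, finrank_coordSub, card_loIdx hpd']
  have hVr : Module.finrank ℝ (cartanAttractor (mat g⁻¹) (d - p)) = d - p := by
    rw [hV, LinearEquiv.finrank_map_eq, finrank_coordSub, card_loIdx (by omega)]
  obtain ⟨v, hvU, hv1⟩ := exists_unit_of_finrank_pos (hUr ▸ (by omega : 0 < p))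
  obtain ⟨w, hwV, hw1⟩ := exists_unit_of_finrank_pos (hVr ▸ (by omega : 0 < d - p))
  have hv0 : v ≠ 0 := by intro hc; rw [hc, norm_zero] at hv1; norm_num at hv1
  have hw0 : w ≠ 0 := by intro hc; rw [hc, norm_zero] at hw1; norm_num at hw1
  have h1 := hang v hvU hv0 w hwV hw0
  have h2 := hang v hvU hv0 (-w) (Submodule.neg_mem _ hwV) (neg_ne_zero.2 hw0)
  rw [InnerProductGeometry.angle_neg_right] at h2
  have := InnerProductGeometry.angle_le_pi v w
  linarith

theorem part2 (p : ℕ) (hp1 : 1 ≤ p) (hpd : p ≤ d - 1) (g h : GL (Fin d) ℝ)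
    (α : ℝ) (hαpos : 0 < α)
    (hang : ∀ v ∈ cartanAttractor (mat h) p, v ≠ 0 →
      ∀ w ∈ cartanAttractor (mat g⁻¹) (d - p), w ≠ 0 →
        α ≤ InnerProductGeometry.angle v w) :
    sv (mat (g * h)) (p + 1) ≤ (Real.sin α)⁻¹ * sv (mat g) (p + 1) * sv (mat h) (p + 1) := by
  have hd2 : 2 ≤ d := by omega
  have hαhalf : α ≤ π / 2 := alpha_half p hp1 hpd g h hang
  have hS : 0 < Real.sin α :=
    Real.sin_pos_of_pos_of_lt_pi hαpos (by linarith [Real.pi_pos])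
  set ipp : Fin d := ⟨p, by omega⟩ with hipp
  set iq : Fin d := ⟨d - p - 1, by omega⟩ with hiq
  have hiqv : (iq : ℕ) + 1 = d - p := by simp [hiq]; omega
  have hreviq : Fin.rev iq = ipp := by
    apply Fin.ext
    rw [Fin.val_rev]
    simp [hiq, hipp]; omega
  have hrevipp : Fin.rev ipp = iq := by rw [← hreviq, Fin.rev_rev]
  -- singular values of g*h
  obtain ⟨kG, lG, σG, hkG, hlG, hσG, hposG, hfactG⟩ := exists_svd (g * h)
  have hσG0 : ∀ i, 0 ≤ σG i := fun i => (hposG i).le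
  have hsvGH : sv (mat (g * h)) (p + 1) = σG ipp := by
    have := sv_svd hkG hlG hσG hσG0 ipp
    rw [show ((ipp : Fin d) : ℕ) = p from rfl] at this
    rw [← hfactG] at this
    exact this
  have hsvGHinv : sv (mat (g * h)⁻¹) (d - p) = (σG ipp)⁻¹ := by
    have := sv_inv (g * h) hkG hlG hσG hσG0 hfactG iq
    rw [hiqv, hreviq] at this
    exact this
  -- singular values of g
  obtain ⟨k', l', σ', hk', hl', hσ', hσ'0, hfact', hV⟩ := attractor_spec g⁻¹ (d - p)
  have hpos' : ∀ i, 0 < σ' i := sigma_pos g⁻¹ hk' hl' hσ'0 hfact'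
  have hsvGi : sv (mat g⁻¹) (d - p) = σ' iq := by
    have := sv_svd hk' hl' hσ' hσ'0 iq
    rw [hiqv, ← hfact'] at this
    exact this
  have hsvG : sv (mat g) (p + 1) = (σ' iq)⁻¹ := by
    have := sv_inv g⁻¹ hk' hl' hσ' hσ'0 hfact' ipp
    rw [show ((ipp : Fin d) : ℕ) = p from rfl, inv_inv, hrevipp] at this
    exact this
  -- singular values of h
  obtain ⟨kH, lH, σH, hkH, hlH, hσH, hposH, hfactH⟩ := exists_svd h
  have hσH0 : ∀ i, 0 ≤ σH i := fun i => (hposH i).le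
  have hsvH : sv (mat h) (p + 1) = σH ipp := by
    have := sv_svd hkH hlH hσH hσH0 ipp
    rw [show ((ipp : Fin d) : ℕ) = p from rfl, ← hfactH] at this
    exact this
  have hsvHinv : sv (mat h⁻¹) (d - p) = (σH ipp)⁻¹ := by
    have := sv_inv h hkH hlH hσH hσH0 hfactH iq
    rw [hiqv, hreviq] at this
    exact this
  -- apply part1 to h⁻¹, g⁻¹ at index d - p
  have hang' : ∀ v ∈ cartanAttractor (mat g⁻¹) (d - p), v ≠ 0 →
      ∀ w ∈ cartanAttractor (mat (h⁻¹)⁻¹) (d - (d - p)), w ≠ 0 →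
        α ≤ InnerProductGeometry.angle v w := by
    intro v hv hv0 w hw hw0
    rw [inv_inv, show d - (d - p) = p by omega] at hw
    rw [InnerProductGeometry.angle_comm]
    exact hang w hw hw0 v hv hv0
  have hpart1 := part1 (d - p) (by omega) (by omega) h⁻¹ g⁻¹ α hαpos hang'
  rw [← mul_inv_rev] at hpart1
  rw [hsvGi, hsvHinv, hsvGHinv] at hpart1
  -- algebra
  set A : ℝ := σG ipp with hA
  have hApos : 0 < A := hposG ipp
  set B : ℝ := σ' iq with hB
  have hBpos : 0 < B := hpos' iq
  set C : ℝ := σH ipp with hC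
  have hCpos : 0 < C := hposH ipp
  -- hpart1 : sin α * (C⁻¹) * B ≤ A⁻¹
  rw [hsvGH, hsvG, hsvH]
  have h2 : Real.sin α * C⁻¹ * B * A ≤ 1 := by
    have := mul_le_mul_of_nonneg_right hpart1 hApos.le
    rwa [inv_mul_cancel₀ hApos.ne'] at this
  have hkey : A * (Real.sin α * C⁻¹ * B) ≤ 1 := by
    rwa [mul_comm] at h2
  calc A = ((Real.sin α)⁻¹ * B⁻¹ * C) * (A * (Real.sin α * C⁻¹ * B)) := by
        field_simp
    _ ≤ ((Real.sin α)⁻¹ * B⁻¹ * C) * 1 := by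
        apply mul_le_mul_of_nonneg_left hkey
        positivity
    _ = (Real.sin α)⁻¹ * B⁻¹ * C := mul_one _
end Aux7
/-- Lemma A.7 of [BPS]: no cancellation. -/
theorem stmt3 {d : ℕ} (p : ℕ) (hp1 : 1 ≤ p) (hpd : p ≤ d - 1)
    (g h : GL (Fin d) ℝ) (hg : HasGap (mat g) p) (hh : HasGap (mat h) p)
    (α : ℝ)
    (hα : α = subAngle (cartanAttractor (mat h) p) (cartanAttractor (mat (g⁻¹)) (d - p)))
    (hαpos : 0 < α) :
    Real.sin α * sv (mat g) p * sv (mat h) p ≤ sv (mat (g * h)) p ∧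
    sv (mat (g * h)) (p + 1) ≤ (Real.sin α)⁻¹ * sv (mat g) (p + 1) * sv (mat h) (p + 1) := by
  have hang : ∀ v ∈ cartanAttractor (mat h) p, v ≠ 0 →
      ∀ w ∈ cartanAttractor (mat g⁻¹) (d - p), w ≠ 0 →
        α ≤ InnerProductGeometry.angle v w := by
    intro v hv hv0 w hw hw0
    rw [hα]
    apply csInf_le
    · refine ⟨0, ?_⟩
      rintro θ ⟨v', _, _, w', _, _, rfl⟩
      exact InnerProductGeometry.angle_nonneg v' w'
    · exact ⟨v, hv, hv0, w, hw, hw0, rfl⟩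
  exact ⟨part1 p hp1 hpd g h α hαpos hang, part2 p hp1 hpd g h α hαpos hang⟩
end Paper
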